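/- arXiv:2510.04461 — 2 statements merged into one kernel-verified Lean document; each statement's English description precedes it below -/
import Mathlib

section
/- Let u, v be vertices of a graph G and let G_{u→v} be the Kelmans transformation of G. Then for every t ≥ 2, the Kelmans transformation does not decrease the number of t-cliques: N_t(G_{u→v}) ≥ N_t(G). Moreover, there is an injection φ from the t-cliques of G to the t-cliques of G_{u→v} such that for each t-clique K, either φ(K) = K or φ(K) = (K \ {u}) ∪ {v}. -/
/-!
A `t`-clique `K` of `G` loses an edge in `G_{u→v}` only if it contains `u` and a vertex of
`P_v(u)`, and then it cannot contain `v`, since vertices of `P_v(u)` are not adjacent to `v`.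
Replacing `u` by `v` in such a clique gives a `t`-clique of `G_{u→v}`: `v` inherits the edges
from `u` to `P_v(u)`. Keeping the cliques that survive and swapping the others is injective,
because a swapped clique contains `v` together with a vertex of `P_v(u)`, so it is not a clique
of `G` and cannot be the image of a surviving one.
-/

variable {V : Type*}

/-- `kelmansP G u v = P_v(u)`: the neighbors of `u` other than `v` that are
not neighbors of `v`. -/
def kelmansP (G : SimpleGraph V) (u v : V) : Set V :=
  {w | G.Adj u w ∧ w ≠ v ∧ ¬ G.Adj v w}

/-- The Kelmans transformation `G_{u→v}`: delete the edges from `u` to the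
vertices of `P_v(u)` and add edges from `v` to the vertices of `P_v(u)`. -/
def kelmans (G : SimpleGraph V) (u v : V) : SimpleGraph V where
  Adj x y :=
    (G.Adj x y ∧ ¬(x = u ∧ y ∈ kelmansP G u v) ∧ ¬(y = u ∧ x ∈ kelmansP G u v)) ∨
      (x = v ∧ y ∈ kelmansP G u v) ∨ (y = v ∧ x ∈ kelmansP G u v)
  symm := by
    constructor
    intro x y h
    rcases h with ⟨h1, h2, h3⟩ | h | h
    · exact Or.inl ⟨h1.symm, h3, h2⟩
    · exact Or.inr (Or.inr h)
    · exact Or.inr (Or.inl h)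
  loopless := by
    constructor
    intro x h
    rcases h with ⟨h, -⟩ | ⟨rfl, -, h, -⟩ | ⟨rfl, -, h, -⟩
    · exact G.loopless.irrefl x h
    · exact h rfl
    · exact h rfl

/-- The circumference of a graph: the length of a longest cycle
(`0` if there is no cycle). -/
noncomputable def circumference (G : SimpleGraph V) : ℕ :=
  sSup {n | ∃ (u : V) (c : G.Walk u u), c.IsCycle ∧ c.length = n}

/-- The number of vertices of a longest path of `G`. -/
noncomputable def longestPathVerts (G : SimpleGraph V) : ℕ :=
  sSup {n | ∃ (u v : V) (p : G.Walk u v), p.IsPath ∧ p.length + 1 = n}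

namespace Finset

variable {α : Type*} [DecidableEq α] {s : Finset α} {a b : α}

theorem card_insert_erase_of_mem_of_notMem (ha : a ∈ s) (hb : b ∉ s) :
    (insert b (s.erase a)).card = s.card := by
  rw [card_insert_of_notMem (fun h ↦ hb (mem_of_mem_erase h)), card_erase_add_one ha]

theorem insert_erase_insert_erase_of_mem_of_notMem (ha : a ∈ s) (hb : b ∉ s) :
    insert a ((insert b (s.erase a)).erase b) = s := by
  rw [erase_insert (fun h ↦ hb (mem_of_mem_erase h)), insert_erase ha]

end Finset

open Finset SimpleGraph

variable {G : SimpleGraph V} {u v : V}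

theorem ne_of_mem_kelmansP {w : V} (hw : w ∈ kelmansP G u v) : w ≠ u :=
  hw.1.ne.symm

theorem kelmans_adj_or_of_adj {x y : V} (h : G.Adj x y) :
    (kelmans G u v).Adj x y ∨
      (x = u ∧ y ∈ kelmansP G u v) ∨ (y = u ∧ x ∈ kelmansP G u v) :=
  or_iff_not_imp_right.2 fun hlost ↦
    Or.inl ⟨h, fun hx ↦ hlost (Or.inl hx), fun hy ↦ hlost (Or.inr hy)⟩

theorem SimpleGraph.IsClique.notMem_kelmansP {s : Set V} (hs : G.IsClique s) (hv : v ∈ s)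
    {w : V} (hw : w ∈ s) : w ∉ kelmansP G u v :=
  fun hwP ↦ hwP.2.2 (hs hv hw (Ne.symm hwP.2.1))

theorem SimpleGraph.IsClique.exists_kelmansP_of_not_isClique_kelmans {s : Set V}
    (hs : G.IsClique s) (hs' : ¬ (kelmans G u v).IsClique s) :
    u ∈ s ∧ v ∉ s ∧ ∃ w ∈ s, w ∈ kelmansP G u v := by
  obtain ⟨x, hx, y, hy, hxy, hnadj⟩ :
      ∃ x ∈ s, ∃ y ∈ s, x ≠ y ∧ ¬ (kelmans G u v).Adj x y := by
    simpa [isClique_iff, Set.Pairwise] using hs'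
  have hlost : ∃ a ∈ s, ∃ b ∈ s, a = u ∧ b ∈ kelmansP G u v := by
    rcases kelmans_adj_or_of_adj (u := u) (v := v) (hs hx hy hxy) with h | h | h
    · exact absurd h hnadj
    · exact ⟨x, hx, y, hy, h⟩
    · exact ⟨y, hy, x, hx, h⟩
  obtain ⟨a, ha, b, hb, rfl, hbP⟩ := hlost
  exact ⟨ha, fun hv ↦ hs.notMem_kelmansP hv hb hbP, b, hb, hbP⟩

theorem isClique_kelmans_insert_diff {s : Set V} (hs : G.IsClique s) (hu : u ∈ s) :
    (kelmans G u v).IsClique (insert v (s \ {u})) := by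
  have hv_adj : ∀ a ∈ s, a ≠ u → a ≠ v → (kelmans G u v).Adj v a := by
    intro a ha hau hav
    by_cases hva : G.Adj v a
    · refine Or.inl ⟨hva, fun h ↦ ?_, fun h ↦ hau h.1⟩
      -- `v = u` would make `a` both adjacent and non-adjacent to `u`
      exact h.2.2.2 (h.1 ▸ hva)
    · exact Or.inr (Or.inl ⟨rfl, hs hu ha (Ne.symm hau), hav, hva⟩)
  intro x hx y hy hxy
  rcases hx with rfl | ⟨hx, hxu⟩ <;> rcases hy with rfl | ⟨hy, hyu⟩
  · exact absurd rfl hxy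
  · exact hv_adj y hy hyu (Ne.symm hxy)
  · exact (hv_adj x hx hxu hxy).symm
  · exact Or.inl ⟨hs hx hy hxy, fun h ↦ hxu h.1, fun h ↦ hyu h.1⟩

variable [DecidableEq V]

open Classical in
noncomputable def kelmansCliqueMap (G : SimpleGraph V) (u v : V) (K : Finset V) : Finset V :=
  if (kelmans G u v).IsClique (K : Set V) then K else insert v (K.erase u)

theorem kelmansCliqueMap_of_isClique {K : Finset V} (h : (kelmans G u v).IsClique (K : Set V)) :
    kelmansCliqueMap G u v K = K :=
  if_pos h

theorem kelmansCliqueMap_of_not_isClique {K : Finset V}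
    (h : ¬ (kelmans G u v).IsClique (K : Set V)) :
    kelmansCliqueMap G u v K = insert v (K.erase u) :=
  if_neg h

theorem kelmansCliqueMap_eq_or (K : Finset V) :
    kelmansCliqueMap G u v K = K ∨ kelmansCliqueMap G u v K = insert v (K.erase u) :=
  (em _).imp kelmansCliqueMap_of_isClique kelmansCliqueMap_of_not_isClique

theorem SimpleGraph.IsNClique.kelmansCliqueMap {t : ℕ} {K : Finset V} (hK : G.IsNClique t K) :
    (kelmans G u v).IsNClique t (kelmansCliqueMap G u v K) := by
  by_cases h : (kelmans G u v).IsClique (K : Set V)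
  · rw [kelmansCliqueMap_of_isClique h]
    exact ⟨h, hK.card_eq⟩
  · obtain ⟨hu, hv, -⟩ := hK.isClique.exists_kelmansP_of_not_isClique_kelmans h
    rw [kelmansCliqueMap_of_not_isClique h]
    refine ⟨?_, (card_insert_erase_of_mem_of_notMem hu hv).trans hK.card_eq⟩
    simpa using isClique_kelmans_insert_diff (v := v) hK.isClique hu

theorem ne_insert_erase_of_not_isClique_kelmans {K L : Finset V}
    (hK : G.IsClique (K : Set V)) (hL : G.IsClique (L : Set V))
    (hL' : ¬ (kelmans G u v).IsClique (L : Set V)) : K ≠ insert v (L.erase u) := by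
  rintro rfl
  obtain ⟨-, -, w, hw, hwP⟩ := hL.exists_kelmansP_of_not_isClique_kelmans hL'
  have hwK : w ∈ insert v (L.erase u) :=
    mem_insert_of_mem (mem_erase.2 ⟨ne_of_mem_kelmansP hwP, hw⟩)
  exact hK.notMem_kelmansP (mem_coe.2 (mem_insert_self _ _)) (mem_coe.2 hwK) hwP

theorem kelmansCliqueMap_injOn :
    Set.InjOn (kelmansCliqueMap G u v) {K | G.IsClique (K : Set V)} := by
  intro K hK L hL hKL
  by_cases hK' : (kelmans G u v).IsClique (K : Set V) <;>
    by_cases hL' : (kelmans G u v).IsClique (L : Set V)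
  · simpa [kelmansCliqueMap_of_isClique hK', kelmansCliqueMap_of_isClique hL'] using hKL
  · rw [kelmansCliqueMap_of_isClique hK', kelmansCliqueMap_of_not_isClique hL'] at hKL
    exact absurd hKL (ne_insert_erase_of_not_isClique_kelmans hK hL hL')
  · rw [kelmansCliqueMap_of_not_isClique hK', kelmansCliqueMap_of_isClique hL'] at hKL
    exact absurd hKL.symm (ne_insert_erase_of_not_isClique_kelmans hL hK hK')
  · obtain ⟨huK, hvK, -⟩ := hK.exists_kelmansP_of_not_isClique_kelmans hK'
    obtain ⟨huL, hvL, -⟩ := hL.exists_kelmansP_of_not_isClique_kelmans hL'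
    rw [kelmansCliqueMap_of_not_isClique hK', kelmansCliqueMap_of_not_isClique hL'] at hKL
    rw [← insert_erase_insert_erase_of_mem_of_notMem huK hvK, hKL,
      insert_erase_insert_erase_of_mem_of_notMem huL hvL]

open scoped Classical in
theorem kelmans_cliques_mono_general {V : Type*} [Fintype V] [DecidableEq V]
    (G : SimpleGraph V) (u v : V) (t : ℕ) :
    (G.cliqueFinset t).card ≤ ((kelmans G u v).cliqueFinset t).card ∧
      ∃ φ : Finset V → Finset V, Set.InjOn φ ↑(G.cliqueFinset t) ∧
        ∀ K ∈ G.cliqueFinset t, φ K ∈ (kelmans G u v).cliqueFinset t ∧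
          (φ K = K ∨ φ K = insert v (K.erase u)) := by
  have hmaps : ∀ K ∈ G.cliqueFinset t,
      kelmansCliqueMap G u v K ∈ (kelmans G u v).cliqueFinset t := fun K hK ↦
    mem_cliqueFinset_iff.2 ((mem_cliqueFinset_iff.1 hK).kelmansCliqueMap (u := u) (v := v))
  have hinj : Set.InjOn (kelmansCliqueMap G u v) ↑(G.cliqueFinset t) :=
    kelmansCliqueMap_injOn.mono fun K hK ↦ (mem_cliqueFinset_iff.1 hK).isClique
  exact ⟨card_le_card_of_injOn _ hmaps hinj, kelmansCliqueMap G u v, hinj,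
    fun K hK ↦ ⟨hmaps K hK, kelmansCliqueMap_eq_or K⟩⟩

open scoped Classical in
/-- The Kelmans transformation does not decrease the number of t-cliques;
moreover there is an injection from the t-cliques of G to those of G_{u→v}
which fixes a clique or replaces u by v in it. -/
theorem kelmans_cliques_mono {V : Type*} [Fintype V] [DecidableEq V]
    (G : SimpleGraph V) (u v : V) (t : ℕ) (ht : 2 ≤ t) :
    (G.cliqueFinset t).card ≤ ((kelmans G u v).cliqueFinset t).card ∧
      ∃ φ : Finset V → Finset V, Set.InjOn φ ↑(G.cliqueFinset t) ∧
        ∀ K ∈ G.cliqueFinset t, φ K ∈ (kelmans G u v).cliqueFinset t ∧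
          (φ K = K ∨ φ K = insert v (K.erase u)) :=
  kelmans_cliques_mono_general G u v t
end

section
/- Let G be a graph, u, v vertices of G, and G_{u→v} the Kelmans transformation. Then for every t ≥ 2, the t-clique spectral radius does not decrease: ρ_t(G_{u→v}) ≥ ρ_t(G), where ρ_t(G) = max { t·∑_{{i_1,...,i_t} ∈ K_t(G)} x_{i_1}···x_{i_t} : x ≥ 0, ∑_i x_i^t = 1 }. -/
variable {V : Type*}

open scoped Classical in
/-- The `t`-clique spectral radius of a graph `G`:
`ρ_t(G) = max { t·∑_{S ∈ K_t(G)} ∏_{i ∈ S} x_i : x ≥ 0, ∑_i x_i^t = 1 }`. -/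
noncomputable def cliqueSpectralRadius {V : Type*} [Fintype V]
    (G : SimpleGraph V) (t : ℕ) : ℝ :=
  sSup {r : ℝ | ∃ x : V → ℝ, (∀ i, 0 ≤ x i) ∧ (∑ i, x i ^ t) = 1 ∧
    r = t * ∑ S ∈ G.cliqueFinset t, ∏ i ∈ S, x i}

/-!
Fix a feasible `x` (nonnegative, `∑ xᵢ^t = 1`); since `G_{u→v} ≅ G_{v→u}` via the
transposition of `u` and `v`, we may assume `x_u ≤ x_v`. Every `t`-clique of `G` that stops being a
clique in `G_{u→v}` contains `u`, avoids `v` and meets `P_v(u)`; replacing `u` by `v` in such a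
clique gives a `t`-clique of `G_{u→v}`, and leaving the other cliques alone gives an injection
`K_t(G) → K_t(G_{u→v})` which does not decrease the monomials `∏_{i ∈ S} xᵢ`.
-/

open Finset

theorem csSup_image_le_csSup_image_of_forall_exists {α β : Type*} [ConditionallyCompleteLattice α]
    {s : Set β} {f g : β → α} (hg : BddAbove (g '' s)) (h : ∀ x ∈ s, ∃ y ∈ s, f x ≤ g y) :
    sSup (f '' s) ≤ sSup (g '' s) := by
  rcases s.eq_empty_or_nonempty with rfl | hs
  · simp
  refine csSup_le (hs.image f) (Set.forall_mem_image.2 fun x hx => ?_)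
  obtain ⟨y, hy, hxy⟩ := h x hx
  exact le_csSup_of_le hg (Set.mem_image_of_mem g hy) hxy

def nonnegSphere (α : Type*) [Fintype α] (t : ℕ) : Set (α → ℝ) :=
  {x | (∀ i, 0 ≤ x i) ∧ ∑ i, x i ^ t = 1}

section NonnegSphere

variable {α β : Type*} [Fintype α] [Fintype β]

theorem comp_equiv_mem_nonnegSphere {t : ℕ} {x : β → ℝ} (hx : x ∈ nonnegSphere β t) (e : α ≃ β) :
    x ∘ e ∈ nonnegSphere α t :=
  ⟨fun i => hx.1 (e i), (e.sum_comp fun j => x j ^ t).trans hx.2⟩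

theorem le_one_of_mem_nonnegSphere {t : ℕ} (ht : t ≠ 0) {x : α → ℝ} (hx : x ∈ nonnegSphere α t)
    (i : α) : x i ≤ 1 := by
  refine (pow_le_one_iff_of_nonneg (hx.1 i) ht).1 ?_
  rw [← hx.2]
  exact single_le_sum (fun j _ => pow_nonneg (hx.1 j) t) (mem_univ i)

end NonnegSphere

namespace SimpleGraph

section CliqueForm

variable {α β : Type*} [Fintype α] [Fintype β]

open scoped Classical in
noncomputable def cliqueForm (G : SimpleGraph α) (t : ℕ) (x : α → ℝ) : ℝ :=
  t * ∑ S ∈ G.cliqueFinset t, ∏ i ∈ S, x i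

theorem cliqueSpectralRadius_eq_sSup_image (G : SimpleGraph α) (t : ℕ) :
    cliqueSpectralRadius G t = sSup (G.cliqueForm t '' nonnegSphere α t) := by
  simp only [cliqueSpectralRadius, cliqueForm, nonnegSphere, Set.image, Set.mem_ofPred_eq,
    and_assoc, eq_comm]

theorem bddAbove_cliqueForm_image (G : SimpleGraph α) {t : ℕ} (ht : t ≠ 0) :
    BddAbove (G.cliqueForm t '' nonnegSphere α t) := by
  classical
  refine ⟨t * #(G.cliqueFinset t), Set.forall_mem_image.2 fun x hx => ?_⟩
  have hprod (S : Finset α) : ∏ i ∈ S, x i ≤ 1 :=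
    prod_le_one (fun i _ => hx.1 i) fun i _ => le_one_of_mem_nonnegSphere ht hx i
  calc G.cliqueForm t x ≤ t * ∑ _S ∈ G.cliqueFinset t, (1 : ℝ) := by
        unfold cliqueForm
        gcongr with S
        exact hprod S
    _ = t * #(G.cliqueFinset t) := by simp

theorem cliqueForm_map_equiv (G : SimpleGraph α) (e : α ≃ β) (t : ℕ) (x : β → ℝ) :
    (G.map e).cliqueForm t x = G.cliqueForm t (x ∘ e) := by
  classical
  unfold cliqueForm
  congr 1
  convert sum_map (G.cliqueFinset t) ⟨Finset.map e.toEmbedding, Finset.map_injective _⟩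
    (fun S => ∏ i ∈ S, x i) using 1
  · congr 1
    refine coe_injective ?_
    push_cast
    exact cliqueSet_map_of_equiv G e t
  · simp [prod_map]

end CliqueForm

section Kelmans

variable {V : Type*} (G : SimpleGraph V) (u v : V)

theorem kelmans_map_swap [DecidableEq V] :
    (kelmans G u v).map (Equiv.swap u v) = kelmans G v u := by
  rw [← Equiv.coe_toEmbedding, ← comap_symm, Equiv.symm_swap]
  ext a b
  simp only [comap_adj, Equiv.toEmbedding_apply]
  by_cases hau : a = u <;> by_cases hav : a = v <;> by_cases hbu : b = u <;>
    by_cases hbv : b = v <;> simp_all [kelmans, kelmansP, Equiv.swap_apply_def, G.adj_comm] <;>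
    tauto

/-- A `t`-clique of `G` satisfies this iff it is not a clique of `G_{u→v}`. -/
def IsKelmansBroken (S : Finset V) : Prop :=
  u ∈ S ∧ v ∉ S ∧ ∃ w ∈ S, w ∈ kelmansP G u v

open scoped Classical in
noncomputable def kelmansCliqueMap [DecidableEq V] (S : Finset V) : Finset V :=
  if G.IsKelmansBroken u v S then insert v (S.erase u) else S

variable {G u v}

theorem isClique_kelmans_of_not_isKelmansBroken {S : Finset V} (hS : G.IsClique (S : Set V))
    (hnb : ¬ G.IsKelmansBroken u v S) : (kelmans G u v).IsClique (S : Set V) := by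
  have hnot : ∀ a ∈ S, ∀ b ∈ S, ¬(a = u ∧ b ∈ kelmansP G u v) := by
    rintro a ha b hb ⟨rfl, hbP⟩
    by_cases hvS : v ∈ S
    · exact hbP.2.2 (hS hvS hb (Ne.symm hbP.2.1))
    · exact hnb ⟨ha, hvS, b, hb, hbP⟩
  intro a ha b hb hab
  exact Or.inl ⟨hS ha hb hab, hnot a ha b hb, hnot b hb a ha⟩

theorem isClique_kelmans_insert_erase [DecidableEq V] {S : Finset V}
    (hS : G.IsClique (S : Set V)) (hb : G.IsKelmansBroken u v S) :
    (kelmans G u v).IsClique ((insert v (S.erase u) : Finset V) : Set V) := by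
  obtain ⟨huS, hvS, w, -, hwP⟩ := hb
  have huv : u ≠ v := by rintro rfl; exact hwP.2.2 hwP.1
  have hS' : G.IsClique (S.erase u : Set V) := hS.subset (by simp)
  rw [coe_insert, isClique_insert]
  refine ⟨?_, fun b hb hvb => ?_⟩
  · exact isClique_kelmans_of_not_isKelmansBroken hS' fun h => S.notMem_erase u h.1
  · obtain ⟨hbu, hbS⟩ := mem_erase.1 hb
    by_cases hbP : b ∈ kelmansP G u v
    · exact Or.inr (Or.inl ⟨rfl, hbP⟩)
    · have hvb : G.Adj v b := by
        by_contra hn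
        exact hbP ⟨hS huS hbS (Ne.symm hbu), Ne.symm hvb, hn⟩
      exact Or.inl ⟨hvb, fun h => huv h.1.symm, fun h => hbu h.1⟩

theorem kelmansCliqueMap_mem_cliqueFinset [Fintype V] [DecidableEq V] [DecidableRel G.Adj]
    [DecidableRel (kelmans G u v).Adj] {t : ℕ} {S : Finset V} (hS : S ∈ G.cliqueFinset t) :
    G.kelmansCliqueMap u v S ∈ (kelmans G u v).cliqueFinset t := by
  rw [mem_cliqueFinset_iff] at hS ⊢
  unfold kelmansCliqueMap
  split_ifs with hb
  · refine ⟨isClique_kelmans_insert_erase hS.1 hb, ?_⟩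
    have hvS : v ∉ S.erase u := fun h => hb.2.1 (mem_of_mem_erase h)
    rw [card_insert_of_notMem hvS, card_erase_add_one hb.1, hS.2]
  · exact ⟨isClique_kelmans_of_not_isKelmansBroken hS.1 hb, hS.2⟩

theorem kelmansCliqueMap_injOn [Fintype V] [DecidableEq V] [DecidableRel G.Adj] (t : ℕ) :
    Set.InjOn (G.kelmansCliqueMap u v) (G.cliqueFinset t) := by
  have hne : ∀ S T : Finset V, G.IsClique (T : Set V) → G.IsKelmansBroken u v S →
      insert v (S.erase u) ≠ T := by
    rintro S T hT ⟨-, -, w, hwS, hwP⟩ rfl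
    have hwu : w ≠ u := by rintro rfl; exact G.loopless.irrefl w hwP.1
    exact hwP.2.2 (hT (mem_insert_self v _) (mem_insert_of_mem (mem_erase.2 ⟨hwu, hwS⟩))
      (Ne.symm hwP.2.1))
  intro S₁ h₁ S₂ h₂ heq
  simp only [coe_cliqueFinset] at h₁ h₂
  unfold kelmansCliqueMap at heq
  split_ifs at heq with hb₁ hb₂ hb₂
  · have hv₁ : v ∉ S₁.erase u := fun h => hb₁.2.1 (mem_of_mem_erase h)
    have hv₂ : v ∉ S₂.erase u := fun h => hb₂.2.1 (mem_of_mem_erase h)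
    have herase : S₁.erase u = S₂.erase u := by
      rw [← erase_insert hv₁, ← erase_insert hv₂, heq]
    rw [← insert_erase hb₁.1, ← insert_erase hb₂.1, herase]
  · exact (hne S₁ S₂ h₂.1 hb₁ heq).elim
  · exact (hne S₂ S₁ h₁.1 hb₂ heq.symm).elim
  · exact heq

theorem prod_le_prod_kelmansCliqueMap [DecidableEq V] {x : V → ℝ} (hx : ∀ i, 0 ≤ x i)
    (hxuv : x u ≤ x v) (S : Finset V) : ∏ i ∈ S, x i ≤ ∏ i ∈ G.kelmansCliqueMap u v S, x i := by
  unfold kelmansCliqueMap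
  split_ifs with hb
  · rw [prod_insert fun h => hb.2.1 (mem_of_mem_erase h), ← mul_prod_erase S x hb.1]
    exact mul_le_mul_of_nonneg_right hxuv (prod_nonneg fun i _ => hx i)
  · exact le_rfl

theorem cliqueForm_le_cliqueForm_kelmans [Fintype V] (t : ℕ) {x : V → ℝ} (hx : ∀ i, 0 ≤ x i)
    (hxuv : x u ≤ x v) : G.cliqueForm t x ≤ (kelmans G u v).cliqueForm t x := by
  classical
  unfold cliqueForm
  gcongr (t : ℝ) * ?_
  calc ∑ S ∈ G.cliqueFinset t, ∏ i ∈ S, x i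
      ≤ ∑ S ∈ G.cliqueFinset t, ∏ i ∈ G.kelmansCliqueMap u v S, x i :=
        sum_le_sum fun S _ => prod_le_prod_kelmansCliqueMap hx hxuv S
    _ = ∑ T ∈ (G.cliqueFinset t).image (G.kelmansCliqueMap u v), ∏ i ∈ T, x i := by
        rw [sum_image (kelmansCliqueMap_injOn t)]
    _ ≤ ∑ T ∈ (kelmans G u v).cliqueFinset t, ∏ i ∈ T, x i :=
        sum_le_sum_of_subset_of_nonneg
          (image_subset_iff.2 fun S hS => kelmansCliqueMap_mem_cliqueFinset hS)
          fun T _ _ => prod_nonneg fun i _ => hx i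

end Kelmans

end SimpleGraph

/-- The Kelmans transformation does not decrease the t-clique spectral
radius. -/
theorem cliqueSpectralRadius_kelmans_ge {V : Type*} [Fintype V]
    (G : SimpleGraph V) (u v : V) (t : ℕ) (ht : 2 ≤ t) :
    cliqueSpectralRadius G t ≤ cliqueSpectralRadius (kelmans G u v) t := by
  classical
  rw [G.cliqueSpectralRadius_eq_sSup_image, (kelmans G u v).cliqueSpectralRadius_eq_sSup_image]
  refine csSup_image_le_csSup_image_of_forall_exists
    ((kelmans G u v).bddAbove_cliqueForm_image (by omega)) fun x hx => ?_
  rcases le_total (x u) (x v) with hxuv | hxvu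
  · exact ⟨x, hx, SimpleGraph.cliqueForm_le_cliqueForm_kelmans t hx.1 hxuv⟩
  · refine ⟨x ∘ Equiv.swap u v, comp_equiv_mem_nonnegSphere hx _, ?_⟩
    calc G.cliqueForm t x ≤ (kelmans G v u).cliqueForm t x :=
          SimpleGraph.cliqueForm_le_cliqueForm_kelmans t hx.1 hxvu
      _ = (kelmans G u v).cliqueForm t (x ∘ Equiv.swap u v) := by
          rw [← G.kelmans_map_swap, SimpleGraph.cliqueForm_map_equiv]
end
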